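/- Let C ∈ ℝ^{p×p} be full rank and η = 1/√(λ_max(CCᵀ)). Consider the implicit update dynamics (I + ηJ)z_{t+1} = z_t with J = [[0,C],[-Cᵀ,0]], z₀ with ‖z₀‖ ≤ r. Then ‖z_{t+1}‖ ≤ (1 - (1 - 1/√2)·λ_min(CCᵀ)/λ_max(CCᵀ))·‖z_t‖ for all t, and consequently ‖z_T‖ ≤ ε whenever T ≥ ⌈(2+√2)·(λ_max(CCᵀ)/λ_min(CCᵀ))·log(r/ε)⌉. -/

import Mathlib

open Matrix
noncomputable section

/-- Largest eigenvalue (for symmetric matrices: sup of real spectrum). -/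
def lamMax {n : Type*} [Fintype n] [DecidableEq n] (M : Matrix n n ℝ) : ℝ :=
  sSup (spectrum ℝ M)

/-- Smallest eigenvalue (for symmetric matrices: inf of real spectrum). -/
def lamMin {n : Type*} [Fintype n] [DecidableEq n] (M : Matrix n n ℝ) : ℝ :=
  sInf (spectrum ℝ M)

/-- Operator (spectral) norm of a square real matrix. -/
def opNorm {n : Type*} [Fintype n] [DecidableEq n] (M : Matrix n n ℝ) : ℝ :=
  ‖toEuclideanCLM (𝕜 := ℝ) M‖

open Classical in
/-- Positive semidefinite square root (junk value `0` if `M` is not PSD). -/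
def msqrt {n : Type*} [Fintype n] [DecidableEq n] (M : Matrix n n ℝ) : Matrix n n ℝ :=
  if h : M.PosSemidef then
    (h.1.eigenvectorUnitary : Matrix n n ℝ) * diagonal ((↑) ∘ (√·) ∘ h.1.eigenvalues) *
      (star h.1.eigenvectorUnitary : Matrix n n ℝ)
  else 0


/-! Since `J` is skew, `‖(I + ηJ)x‖² = ‖x‖² + η²‖Jx‖²`, and `JᵀJ = diag(CCᵀ, CᵀC)` has the same
spectrum as `CCᵀ` (because `AB` and `BA` have the same characteristic polynomial). Hence
`‖(I + ηJ)x‖² ≥ (1 + κ)‖x‖²` with `κ = λ_min/λ_max ∈ (0, 1]`, so each implicit step contracts by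
`1/√(1 + κ) ≤ 1 - (1 - 1/√2)κ`, the chord bound for the convex function `κ ↦ 1/√(1 + κ)` on
`[0, 1]`. The iteration count follows from `1 - a ≤ exp(-a)` and `(1 - 1/√2)⁻¹ = 2 + √2`. -/

open scoped RealInnerProductSpace

namespace Matrix

section Field

variable {K : Type*} [Field K] {m n : Type*} [Fintype m] [Fintype n] [DecidableEq m] [DecidableEq n]

theorem isUnit_of_rank_eq_card {A : Matrix n n K} (h : A.rank = Fintype.card n) : IsUnit A := by
  rw [← mulVec_surjective_iff_isUnit, ← coe_mulVecLin, ← LinearMap.range_eq_top]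
  apply Submodule.eq_top_of_finrank_eq
  rw [← rank, h, Module.finrank_fintype_fun_eq_card]

theorem spectrum_mul_comm (A B : Matrix n n K) : spectrum K (A * B) = spectrum K (B * A) := by
  ext r
  simp only [mem_spectrum_iff_isRoot_charpoly, charpoly_mul_comm]

theorem spectrum_fromBlocks_zero (A : Matrix m m K) (D : Matrix n n K) :
    spectrum K (fromBlocks A 0 0 D) = spectrum K A ∪ spectrum K D := by
  ext r
  simp only [Set.mem_union, mem_spectrum_iff_isRoot_charpoly, charpoly_fromBlocks_zero₁₂,
    Polynomial.root_mul]

end Field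

theorem transpose_mul_self_fromBlocks_skew {R : Type*} [CommRing R] {m n : Type*} [Fintype m]
    [Fintype n] (C : Matrix m n R) :
    (fromBlocks 0 C (-Cᵀ) 0)ᵀ * fromBlocks 0 C (-Cᵀ) 0 = fromBlocks (C * Cᵀ) 0 0 (Cᵀ * C) := by
  simp [fromBlocks_transpose, fromBlocks_multiply]

variable {n : Type*} [Fintype n] [DecidableEq n] {M : Matrix n n ℝ}

theorem IsHermitian.lamMin_le_lamMax (hM : M.IsHermitian) : lamMin M ≤ lamMax M := by
  rcases isEmpty_or_nonempty n with hn | hn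
  · simp [lamMin, lamMax]
  exact csInf_le_csSup (hM.spectrum_real_eq_range_eigenvalues ▸ Set.range_nonempty _)
    (Set.toFinite _).bddBelow (Set.toFinite _).bddAbove

theorem PosDef.lamMin_pos [Nonempty n] (hM : M.PosDef) : 0 < lamMin M := by
  have hne : (spectrum ℝ M).Nonempty :=
    hM.isHermitian.spectrum_real_eq_range_eigenvalues ▸ Set.range_nonempty _
  obtain ⟨i, hi⟩ : lamMin M ∈ Set.range hM.isHermitian.eigenvalues :=
    hM.isHermitian.spectrum_real_eq_range_eigenvalues ▸ hne.csInf_mem (Set.toFinite _)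
  exact hi ▸ hM.eigenvalues_pos i

theorem posDef_mul_transpose_of_rank_eq_card {C : Matrix n n ℝ} (hC : C.rank = Fintype.card n) :
    (C * Cᵀ).PosDef := by
  simpa only [conjTranspose_eq_transpose_of_trivial] using
    PosDef.mul_conjTranspose_self C (vecMul_injective_iff_isUnit.mpr (isUnit_of_rank_eq_card hC))

theorem IsHermitian.posSemidef_sub_lamMin_smul_one (hM : M.IsHermitian) :
    (M - lamMin M • 1).PosSemidef := by
  rw [posSemidef_iff_isHermitian_and_spectrum_nonneg, ← Algebra.algebraMap_eq_smul_one,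
    ← spectrum.sub_singleton_eq]
  refine ⟨hM.sub (IsSelfAdjoint.algebraMap (Matrix n n ℝ) (.all (lamMin M))), ?_⟩
  rintro _ ⟨μ, hμ, c, rfl, rfl⟩
  exact sub_nonneg.mpr (csInf_le (Set.toFinite _).bddBelow hμ)

theorem IsHermitian.lamMin_mul_norm_sq_le_inner (hM : M.IsHermitian) (x : EuclideanSpace ℝ n) :
    lamMin M * ‖x‖ ^ 2 ≤ ⟪x, toEuclideanCLM (𝕜 := ℝ) M x⟫ := by
  have h := hM.posSemidef_sub_lamMin_smul_one.dotProduct_mulVec_nonneg x.ofLp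
  rw [inner_toEuclideanCLM, ← real_inner_self_eq_norm_sq, EuclideanSpace.inner_eq_star_dotProduct]
  simp only [star_trivial, sub_mulVec, smul_mulVec, one_mulVec, dotProduct_sub,
    dotProduct_smul, smul_eq_mul] at h ⊢
  linarith

theorem inner_self_toEuclideanCLM_eq_zero_of_transpose_eq_neg {J : Matrix n n ℝ} (hJ : Jᵀ = -J)
    (x : EuclideanSpace ℝ n) : ⟪x, toEuclideanCLM (𝕜 := ℝ) J x⟫ = 0 := by
  have h : x.ofLp ⬝ᵥ J *ᵥ x.ofLp = -(x.ofLp ⬝ᵥ J *ᵥ x.ofLp) := by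
    conv_lhs => rw [dotProduct_mulVec, ← mulVec_transpose, hJ, dotProduct_comm]
    rw [neg_mulVec, dotProduct_neg]
  rw [inner_toEuclideanCLM]
  linarith

theorem norm_toEuclideanCLM_sq (A : Matrix n n ℝ) (x : EuclideanSpace ℝ n) :
    ‖toEuclideanCLM (𝕜 := ℝ) A x‖ ^ 2 = ⟪x, toEuclideanCLM (𝕜 := ℝ) (Aᵀ * A) x⟫ := by
  rw [← real_inner_self_eq_norm_sq, inner_toEuclideanCLM, inner_toEuclideanCLM, ofLp_toEuclideanCLM,
    ← mulVec_mulVec, dotProduct_mulVec x.ofLp, vecMul_transpose]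

theorem norm_toEuclideanCLM_one_add_smul_sq {J : Matrix n n ℝ} (hJ : Jᵀ = -J) (η : ℝ)
    (x : EuclideanSpace ℝ n) :
    ‖toEuclideanCLM (𝕜 := ℝ) (1 + η • J) x‖ ^ 2 =
      ‖x‖ ^ 2 + η ^ 2 * ‖toEuclideanCLM (𝕜 := ℝ) J x‖ ^ 2 := by
  have horth : ⟪x, η • toEuclideanCLM (𝕜 := ℝ) J x⟫ = 0 := by
    rw [inner_smul_right, inner_self_toEuclideanCLM_eq_zero_of_transpose_eq_neg hJ, mul_zero]
  have hsplit : toEuclideanCLM (𝕜 := ℝ) (1 + η • J) x = x + η • toEuclideanCLM (𝕜 := ℝ) J x := by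
    simp
  rw [hsplit, norm_add_sq_real, horth, norm_smul, mul_pow, Real.norm_eq_abs, sq_abs, mul_zero,
    add_zero]

theorem one_add_sq_mul_lamMin_mul_norm_sq_le (C : Matrix n n ℝ) (η : ℝ)
    (x : EuclideanSpace ℝ (n ⊕ n)) :
    (1 + η ^ 2 * lamMin (C * Cᵀ)) * ‖x‖ ^ 2 ≤
      ‖toEuclideanCLM (𝕜 := ℝ) (1 + η • fromBlocks 0 C (-Cᵀ) 0) x‖ ^ 2 := by
  set J := fromBlocks 0 C (-Cᵀ) 0
  have hJ : Jᵀ = -J := by simp [J, fromBlocks_transpose, fromBlocks_neg]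
  have hK : lamMin (Jᵀ * J) = lamMin (C * Cᵀ) := by
    rw [lamMin, lamMin, transpose_mul_self_fromBlocks_skew, spectrum_fromBlocks_zero,
      spectrum_mul_comm Cᵀ, Set.union_self]
  have hK_herm : (Jᵀ * J).IsHermitian := by
    simpa only [conjTranspose_eq_transpose_of_trivial] using isHermitian_conjTranspose_mul_self J
  have hquad := hK_herm.lamMin_mul_norm_sq_le_inner x
  rw [norm_toEuclideanCLM_one_add_smul_sq hJ, norm_toEuclideanCLM_sq, ← hK]
  nlinarith [mul_le_mul_of_nonneg_left hquad (sq_nonneg η)]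

end Matrix

open Real

theorem inv_one_sub_one_div_sqrt_two : (1 - 1 / √2)⁻¹ = 2 + √2 := by
  refine inv_eq_of_mul_eq_one_right ?_
  have hs : √2 ^ 2 = 2 := sq_sqrt (by norm_num)
  field_simp
  linear_combination hs

theorem one_le_one_sub_mul_mul_sqrt_one_add {κ : ℝ} (h0 : 0 ≤ κ) (h1 : κ ≤ 1) :
    1 ≤ (1 - (1 - 1 / √2) * κ) * √(1 + κ) := by
  have hs : √2 ^ 2 = 2 := sq_sqrt (by norm_num)
  have hs_lo : 4 / 3 ≤ √2 := le_sqrt_of_sq_le (by norm_num)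
  have hs_hi : √2 ≤ 3 / 2 := (sqrt_le_left (by norm_num)).mpr (by norm_num)
  have hinv : 1 / √2 = √2 / 2 := by field_simp; linarith
  have hκ : 0 ≤ κ * (1 - κ) := mul_nonneg h0 (sub_nonneg.mpr h1)
  -- `(1 + (√2 - 1) κ)² = 1 + κ - (3 - 2√2) κ (1 - κ)`
  have hsqrt : 1 + (√2 - 1) * κ ≤ √(1 + κ) :=
    le_sqrt_of_sq_le (by nlinarith [mul_nonneg hκ (show (0 : ℝ) ≤ 3 - 2 * √2 by linarith)])
  -- `(1 - (1 - √2/2) κ) (1 + (√2 - 1) κ) = 1 + (3√2/2 - 2) κ (1 - κ)`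
  have hprod : 1 ≤ (1 - (1 - 1 / √2) * κ) * (1 + (√2 - 1) * κ) := by
    rw [hinv]
    nlinarith [mul_nonneg hκ (show (0 : ℝ) ≤ 3 * √2 / 2 - 2 by linarith)]
  have hρ : 0 ≤ 1 - (1 - 1 / √2) * κ := by rw [hinv]; nlinarith
  exact hprod.trans (mul_le_mul_of_nonneg_left hsqrt hρ)

theorem le_one_sub_mul_of_one_add_mul_sq_le {κ u v : ℝ} (hκ0 : 0 ≤ κ) (hκ1 : κ ≤ 1)
    (hu : 0 ≤ u) (hv : 0 ≤ v) (h : (1 + κ) * u ^ 2 ≤ v ^ 2) :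
    u ≤ (1 - (1 - 1 / √2) * κ) * v := by
  have hρ := one_le_one_sub_mul_mul_sqrt_one_add hκ0 hκ1
  have hρ0 : 0 ≤ 1 - (1 - 1 / √2) * κ :=
    nonneg_of_mul_nonneg_left (zero_le_one.trans hρ) (sqrt_pos.mpr (by linarith))
  have hsqrt : √(1 + κ) * u ≤ v := by
    refine (pow_le_pow_iff_left₀ (by positivity) hv two_ne_zero).mp ?_
    rwa [mul_pow, sq_sqrt (by linarith)]
  calc u ≤ (1 - (1 - 1 / √2) * κ) * √(1 + κ) * u := le_mul_of_one_le_left hu hρ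
    _ ≤ (1 - (1 - 1 / √2) * κ) * v := by
      rw [mul_assoc]
      exact mul_le_mul_of_nonneg_left hsqrt hρ0

theorem norm_le_of_norm_succ_le_one_sub_mul {E : Type*} [SeminormedAddGroup E] {z : ℕ → E}
    {a r ε : ℝ} (ha0 : 0 < a) (ha1 : a ≤ 1) (hε : 0 < ε) (h0 : ‖z 0‖ ≤ r)
    (hz : ∀ t, ‖z (t + 1)‖ ≤ (1 - a) * ‖z t‖) {T : ℕ} (hT : ⌈a⁻¹ * log (r / ε)⌉ ≤ (T : ℤ)) :
    ‖z T‖ ≤ ε := by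
  have hT' : log (r / ε) ≤ a * T := by
    rw [← inv_mul_le_iff₀ ha0]
    exact_mod_cast Int.ceil_le.mp hT
  have hpow : (1 - a) ^ T ≤ exp (-(a * T)) := by
    rw [neg_mul_eq_neg_mul, mul_comm, exp_nat_mul]
    exact pow_le_pow_left₀ (by linarith) (by linarith [add_one_le_exp (-a)]) T
  have hexp : r ≤ ε * exp (a * T) := by
    have := (le_exp_log (r / ε)).trans (exp_le_exp.mpr hT')
    rwa [div_le_iff₀' hε] at this
  calc ‖z T‖ ≤ (1 - a) ^ T * ‖z 0‖ := le_geom (u := fun t => ‖z t‖) (sub_nonneg.mpr ha1) T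
        fun k _ => hz k
    _ ≤ exp (-(a * T)) * r := mul_le_mul hpow h0 (norm_nonneg _) (exp_pos _).le
    _ ≤ ε := by
      rw [exp_neg, inv_mul_le_iff₀ (exp_pos _), mul_comm]
      exact hexp

theorem stmt17 {p : ℕ} (C : Matrix (Fin p) (Fin p) ℝ) (hC : C.rank = p) (η r ε : ℝ)
    (hε : 0 < ε) (hη : η = 1 / Real.sqrt (lamMax (C * Cᵀ)))
    (J : Matrix (Fin p ⊕ Fin p) (Fin p ⊕ Fin p) ℝ) (hJ : J = fromBlocks 0 C (-Cᵀ) 0)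
    (z : ℕ → EuclideanSpace ℝ (Fin p ⊕ Fin p))
    (hz : ∀ t, toEuclideanCLM (𝕜 := ℝ) (1 + η • J) (z (t + 1)) = z t)
    (h0 : ‖z 0‖ ≤ r) :
    (∀ t, ‖z (t + 1)‖ ≤
      (1 - (1 - 1 / Real.sqrt 2) * (lamMin (C * Cᵀ) / lamMax (C * Cᵀ))) * ‖z t‖) ∧
    ∀ T : ℕ,
      ⌈(2 + Real.sqrt 2) * (lamMax (C * Cᵀ) / lamMin (C * Cᵀ)) * Real.log (r / ε)⌉ ≤ (T : ℤ) →
        ‖z T‖ ≤ ε := by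
  rcases isEmpty_or_nonempty (Fin p) with hp | hp
  · simp [Subsingleton.elim (z _) 0, hε.le]
  have hCC := posDef_mul_transpose_of_rank_eq_card (hC.trans (Fintype.card_fin p).symm)
  have hmin := hCC.lamMin_pos
  have hle := hCC.isHermitian.lamMin_le_lamMax
  have hmax := hmin.trans_le hle
  set κ := lamMin (C * Cᵀ) / lamMax (C * Cᵀ)
  have hκ0 : 0 ≤ κ := div_nonneg hmin.le hmax.le
  have hκ1 : κ ≤ 1 := div_le_one_of_le₀ hle hmax.le
  have hηκ : η ^ 2 * lamMin (C * Cᵀ) = κ := by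
    rw [hη, div_pow, sq_sqrt hmax.le, one_pow, div_mul_eq_mul_div, one_mul]
  have hstep (t : ℕ) : ‖z (t + 1)‖ ≤ (1 - (1 - 1 / √2) * κ) * ‖z t‖ := by
    refine le_one_sub_mul_of_one_add_mul_sq_le hκ0 hκ1 (norm_nonneg _) (norm_nonneg _) ?_
    simpa only [← hJ, hz t, hηκ] using one_add_sq_mul_lamMin_mul_norm_sq_le C η (z (t + 1))
  have hrate : (2 + √2) * (lamMax (C * Cᵀ) / lamMin (C * Cᵀ)) = ((1 - 1 / √2) * κ)⁻¹ := by
    rw [mul_inv, inv_one_sub_one_div_sqrt_two, inv_div]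
  refine ⟨hstep, fun T hT => norm_le_of_norm_succ_le_one_sub_mul ?_ ?_ hε h0 hstep (hrate ▸ hT)⟩
  · exact inv_pos.mp (hrate ▸ by positivity)
  · exact mul_le_one₀ (sub_le_self _ (by positivity)) hκ0 hκ1
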